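/- arXiv:math/0506387 — 2 statements merged into one kernel-verified Lean document; each statement's English description precedes it below -/
import Mathlib

section
/- The vector representation matrices of U_q[osp(2|n)] satisfy the q-Serre relations for the even simple roots: for every even simple root index b ∈ {1, …, k−1} and every simple root index c ∈ {1, …, k−1, s, t} with c ≠ b, (ad_b)^{1 − a_{bc}}(E_c) = 0, where E_c = e_c q^{h_c/2}, ad_b(X) = E_b X − q^{h_b} X q^{−h_b} E_b, and a_{bc} = 2(α_b, α_c)/(α_b, α_b) is the Cartan matrix entry. -/
open Matrix BigOperators

namespace Osp2n

/-- Index set `I = {e1,e2} ∪ {o1,…,o(2k)}`: `inl` indices are even, `inr` odd. -/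
abbrev Idx (k : ℕ) := Fin 2 ⊕ Fin (2*k)

/-- parity `[a]` -/
def par {k : ℕ} : Idx k → ℕ
  | .inl _ => 0
  | .inr _ => 1

/-- conjugation of indices: `ē1 = e2`, `ē2 = e1`, `ōμ = o(n+1−μ)` -/
def bar {k : ℕ} : Idx k → Idx k
  | .inl i => .inl i.rev
  | .inr j => .inr j.rev

/-- sign factor `ξ_a` -/
def xi {k : ℕ} : Idx k → ℝ
  | .inl _ => 1
  | .inr j => (-1 : ℝ) ^ ((j : ℕ) + 1)

/-- weight of an index, in `ℚ^{k+1}`; coordinates `0,…,k-1` are `δ_1,…,δ_k`,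
coordinate `k` is `ε_1`. -/
def wt {k : ℕ} : Idx k → (Fin (k+1) → ℚ)
  | .inl i => if i = 0 then Pi.single (Fin.last k) 1 else -(Pi.single (Fin.last k) 1)
  | .inr j =>
      if h : (j : ℕ) < k then Pi.single ⟨j, by omega⟩ 1
      else -(Pi.single ⟨2*k - 1 - (j:ℕ), by have := j.isLt; omega⟩ 1)

/-- the invariant bilinear form: `(ε_1,ε_1)=1`, `(δ_μ,δ_ν)=−δ_{μν}`, `(ε_1,δ_μ)=0`. -/
def bform {k : ℕ} (u v : Fin (k+1) → ℚ) : ℚ :=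
  u (Fin.last k) * v (Fin.last k) - ∑ μ : Fin k, u μ.castSucc * v μ.castSucc

/-- the graded half-sum of positive roots `ρ = Σ_{μ=1}^k (k−μ) δ_μ`. -/
def rho (k : ℕ) : Fin (k+1) → ℚ :=
  fun i => if (i:ℕ) < k then (k : ℚ) - 1 - ((i:ℕ) : ℚ) else 0

/-- rank realising the total order
`δ_1 > … > δ_k > ε_1 > −ε_1 > −δ_k > … > −δ_1` on the weights of indices:
`ε_b > ε_a` iff `rk b < rk a`. -/
def rk {k : ℕ} : Idx k → ℕ
  | .inl i => if i = 0 then k else k + 1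
  | .inr j => if (j:ℕ) < k then (j:ℕ) else (j:ℕ) + 2

/-- real power `q^r` for rational `r` -/
noncomputable def qp (q : ℝ) (r : ℚ) : ℝ := q ^ (r : ℝ)

/-- elementary matrix `E^a_b` -/
def E {k : ℕ} (a b : Idx k) : Matrix (Idx k) (Idx k) ℝ := Matrix.single a b 1

/-- `σ̃_{ba} = E^b_a − (−1)^{[b]([a]+[b])} ξ_a ξ_b q^{(ρ,ε_a−ε_b)} E^{ā}_{b̄}`
(for `ε_b > ε_a`). -/
noncomputable def sigT {k : ℕ} (q : ℝ) (b a : Idx k) : Matrix (Idx k) (Idx k) ℝ :=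
  E b a - ((-1:ℝ) ^ (par b * (par a + par b)) * xi a * xi b *
    qp q (bform (rho k) (wt a - wt b))) • E (bar a) (bar b)

/-- `σ̃_{ab} = E^a_b − (−1)^{[a]([a]+[b])} ξ_a ξ_b q^{(ρ,ε_a−ε_b)} E^{b̄}_{ā}`
(for `ε_b > ε_a`). -/
noncomputable def sigTop {k : ℕ} (q : ℝ) (a b : Idx k) : Matrix (Idx k) (Idx k) ℝ :=
  E a b - ((-1:ℝ) ^ (par a * (par a + par b)) * xi a * xi b *
    qp q (bform (rho k) (wt a - wt b))) • E (bar b) (bar a)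

/-- the vector-representation operator
`σ̂_{ba} = q^{−(ε_a,ε_b)} E^b_a − (−1)^{[b]([a]+[b])} ξ_a ξ_b q^{(ε_a,ε_a)} q^{(ρ,ε_a−ε_b)} E^{ā}_{b̄}`. -/
noncomputable def sigH {k : ℕ} (q : ℝ) (b a : Idx k) : Matrix (Idx k) (Idx k) ℝ :=
  qp q (-(bform (wt a) (wt b))) • E b a -
    ((-1:ℝ) ^ (par b * (par a + par b)) * xi a * xi b * qp q (bform (wt a) (wt a)) *
      qp q (bform (rho k) (wt a - wt b))) • E (bar a) (bar b)

/-- graded Kronecker product `X ⊗̂ Y` where `Y` is homogeneous of parity `p`: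
`(X ⊗̂ Y)_{(a,b),(c,d)} = (−1)^{p·[c]} X_{ac} Y_{bd}`. -/
def gkron {k : ℕ} (p : ℕ) (X Y : Matrix (Idx k) (Idx k) ℝ) :
    Matrix (Idx k × Idx k) (Idx k × Idx k) ℝ :=
  Matrix.of fun r c => (-1:ℝ) ^ (p * par c.1) * X r.1 c.1 * Y r.2 c.2

/-- the R-matrix of the vector representation:
`𝕽 = Σ_{a,b} q^{(ε_a,ε_b)} E^a_a ⊗̂ E^b_b + (q−q⁻¹) Σ_{ε_b>ε_a} (−1)^{[b]} E^a_b ⊗̂ σ̃_{ba}`. -/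
noncomputable def Rmat (k : ℕ) (q : ℝ) : Matrix (Idx k × Idx k) (Idx k × Idx k) ℝ :=
  (∑ a : Idx k, ∑ b : Idx k, qp q (bform (wt a) (wt b)) • gkron 0 (E a a) (E b b))
  + (q - q⁻¹) • ∑ a : Idx k, ∑ b : Idx k,
      if rk b < rk a then ((-1:ℝ) ^ par b) • gkron (par a + par b) (E a b) (sigT q b a) else 0

/-- the opposite R-matrix of the vector representation:
`𝕽^T = Σ_{a,b} q^{(ε_a,ε_b)} E^a_a ⊗̂ E^b_b + (q−q⁻¹) Σ_{ε_b>ε_a} (−1)^{[a]} E^b_a ⊗̂ σ̃_{ab}`. -/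
noncomputable def RmatT (k : ℕ) (q : ℝ) : Matrix (Idx k × Idx k) (Idx k × Idx k) ℝ :=
  (∑ a : Idx k, ∑ b : Idx k, qp q (bform (wt a) (wt b)) • gkron 0 (E a a) (E b b))
  + (q - q⁻¹) • ∑ a : Idx k, ∑ b : Idx k,
      if rk b < rk a then ((-1:ℝ) ^ par a) • gkron (par a + par b) (E b a) (sigTop q a b) else 0

/-- `𝕽₁₂ = 𝕽 ⊗ 1` -/
noncomputable def R12 (k : ℕ) (q : ℝ) :
    Matrix (Idx k × Idx k × Idx k) (Idx k × Idx k × Idx k) ℝ :=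
  Matrix.of fun r c => Rmat k q (r.1, r.2.1) (c.1, c.2.1) * (if r.2.2 = c.2.2 then (1:ℝ) else 0)

/-- `𝕽₂₃ = 1 ⊗ 𝕽` -/
noncomputable def R23 (k : ℕ) (q : ℝ) :
    Matrix (Idx k × Idx k × Idx k) (Idx k × Idx k × Idx k) ℝ :=
  Matrix.of fun r c => (if r.1 = c.1 then (1:ℝ) else 0) * Rmat k q (r.2.1, r.2.2) (c.2.1, c.2.2)

/-- `𝕽₁₃`, defined termwise with the grading sign
`(𝕽₁₃)_{(a,b,c),(d,e,f)} = Σ_t (−1)^{p_t([d]+[e])} (x_t)_{ad} δ_{be} (y_t)_{cf}`. -/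
noncomputable def R13 (k : ℕ) (q : ℝ) :
    Matrix (Idx k × Idx k × Idx k) (Idx k × Idx k × Idx k) ℝ :=
  Matrix.of fun r c =>
    (∑ x : Idx k, ∑ y : Idx k, qp q (bform (wt x) (wt y)) *
        E x x r.1 c.1 * (if r.2.1 = c.2.1 then (1:ℝ) else 0) * E y y r.2.2 c.2.2)
    + (q - q⁻¹) * ∑ a : Idx k, ∑ b : Idx k,
        if rk b < rk a then
          (-1:ℝ) ^ par b * (-1:ℝ) ^ ((par a + par b) * (par c.1 + par c.2.1)) *
            E a b r.1 c.1 * (if r.2.1 = c.2.1 then (1:ℝ) else 0) * sigT q b a r.2.2 c.2.2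
        else 0

/-- `𝕽^T₁₂ = 𝕽^T ⊗ 1` -/
noncomputable def R12T (k : ℕ) (q : ℝ) :
    Matrix (Idx k × Idx k × Idx k) (Idx k × Idx k × Idx k) ℝ :=
  Matrix.of fun r c => RmatT k q (r.1, r.2.1) (c.1, c.2.1) * (if r.2.2 = c.2.2 then (1:ℝ) else 0)

/-- `𝕽^T₂₃ = 1 ⊗ 𝕽^T` -/
noncomputable def R23T (k : ℕ) (q : ℝ) :
    Matrix (Idx k × Idx k × Idx k) (Idx k × Idx k × Idx k) ℝ :=
  Matrix.of fun r c => (if r.1 = c.1 then (1:ℝ) else 0) * RmatT k q (r.2.1, r.2.2) (c.2.1, c.2.2)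

/-- `𝕽^T₁₃`, defined termwise with the grading sign. -/
noncomputable def R13T (k : ℕ) (q : ℝ) :
    Matrix (Idx k × Idx k × Idx k) (Idx k × Idx k × Idx k) ℝ :=
  Matrix.of fun r c =>
    (∑ x : Idx k, ∑ y : Idx k, qp q (bform (wt x) (wt y)) *
        E x x r.1 c.1 * (if r.2.1 = c.2.1 then (1:ℝ) else 0) * E y y r.2.2 c.2.2)
    + (q - q⁻¹) * ∑ a : Idx k, ∑ b : Idx k,
        if rk b < rk a then
          (-1:ℝ) ^ par a * (-1:ℝ) ^ ((par a + par b) * (par c.1 + par c.2.1)) *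
            E b a r.1 c.1 * (if r.2.1 = c.2.1 then (1:ℝ) else 0) * sigTop q a b r.2.2 c.2.2
        else 0

/-- simple root indices: `inl μ ↦ α_{μ+1}` (1-based, `μ+1 ∈ {1,…,k−1}`), `inr 0 ↦ α_s`,
`inr 1 ↦ α_t`. -/
abbrev SIdx (k : ℕ) := Fin (k-1) ⊕ Fin 2

/-- parity of a simple root -/
def spar {k : ℕ} : SIdx k → ℕ
  | .inl _ => 0
  | .inr _ => 1

/-- the simple roots: `α_μ = δ_μ − δ_{μ+1}` for `1 ≤ μ < k`, `α_s = δ_k − ε_1`,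
`α_t = δ_k + ε_1`. -/
def alph {k : ℕ} : SIdx k → (Fin (k+1) → ℚ)
  | .inl μ => Pi.single ⟨(μ:ℕ), by have := μ.isLt; omega⟩ 1
      - Pi.single ⟨(μ:ℕ)+1, by have := μ.isLt; omega⟩ 1
  | .inr i => (Pi.single (⟨k-1, by omega⟩ : Fin (k+1)) 1 : Fin (k+1) → ℚ)
      + Pi.single (Fin.last k) (if i = 0 then (-1:ℚ) else 1)

/-- vector representation of the raising generators -/
noncomputable def em {k : ℕ} (hk : 1 ≤ k) : SIdx k → Matrix (Idx k) (Idx k) ℝ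
  | .inl μ =>
      E (.inr ⟨(μ:ℕ), by have := μ.isLt; omega⟩) (.inr ⟨(μ:ℕ)+1, by have := μ.isLt; omega⟩)
    + E (.inr ⟨2*k-(μ:ℕ)-2, by have := μ.isLt; omega⟩)
        (.inr ⟨2*k-(μ:ℕ)-1, by have := μ.isLt; omega⟩)
  | .inr i =>
      if i = 0 then
        E (.inr ⟨k-1, by omega⟩) (.inl 0) + ((-1:ℝ)^k) • E (.inl 1) (.inr ⟨k, by omega⟩)
      else
        E (.inr ⟨k-1, by omega⟩) (.inl 1) + ((-1:ℝ)^k) • E (.inl 0) (.inr ⟨k, by omega⟩)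

/-- vector representation of the lowering generators -/
noncomputable def fm {k : ℕ} (hk : 1 ≤ k) : SIdx k → Matrix (Idx k) (Idx k) ℝ
  | .inl μ =>
      E (.inr ⟨(μ:ℕ)+1, by have := μ.isLt; omega⟩) (.inr ⟨(μ:ℕ), by have := μ.isLt; omega⟩)
    + E (.inr ⟨2*k-(μ:ℕ)-1, by have := μ.isLt; omega⟩)
        (.inr ⟨2*k-(μ:ℕ)-2, by have := μ.isLt; omega⟩)
  | .inr i =>
      if i = 0 then
        -E (.inl 0) (.inr ⟨k-1, by omega⟩) + ((-1:ℝ)^k) • E (.inr ⟨k, by omega⟩) (.inl 1)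
      else
        -E (.inl 1) (.inr ⟨k-1, by omega⟩) + ((-1:ℝ)^k) • E (.inr ⟨k, by omega⟩) (.inl 0)

/-- vector representation of the Cartan generators -/
noncomputable def hm {k : ℕ} (hk : 1 ≤ k) : SIdx k → Matrix (Idx k) (Idx k) ℝ
  | .inl μ =>
      E (.inr ⟨(μ:ℕ)+1, by have := μ.isLt; omega⟩) (.inr ⟨(μ:ℕ)+1, by have := μ.isLt; omega⟩)
    - E (.inr ⟨2*k-(μ:ℕ)-2, by have := μ.isLt; omega⟩)
        (.inr ⟨2*k-(μ:ℕ)-2, by have := μ.isLt; omega⟩)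
    - E (.inr ⟨(μ:ℕ), by have := μ.isLt; omega⟩) (.inr ⟨(μ:ℕ), by have := μ.isLt; omega⟩)
    + E (.inr ⟨2*k-(μ:ℕ)-1, by have := μ.isLt; omega⟩)
        (.inr ⟨2*k-(μ:ℕ)-1, by have := μ.isLt; omega⟩)
  | .inr i =>
      if i = 0 then
        -E (.inl 0) (.inl 0) + E (.inl 1) (.inl 1)
        - E (.inr ⟨k-1, by omega⟩) (.inr ⟨k-1, by omega⟩)
        + E (.inr ⟨k, by omega⟩) (.inr ⟨k, by omega⟩)
      else
        E (.inl 0) (.inl 0) - E (.inl 1) (.inl 1)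
        - E (.inr ⟨k-1, by omega⟩) (.inr ⟨k-1, by omega⟩)
        + E (.inr ⟨k, by omega⟩) (.inr ⟨k, by omega⟩)

/-- `q^{r·h_c}`: the diagonal matrix `Σ_a q^{r·(α_c,ε_a)} E^a_a` -/
noncomputable def qh {k : ℕ} (q : ℝ) (r : ℚ) (c : SIdx k) : Matrix (Idx k) (Idx k) ℝ :=
  Matrix.diagonal (fun a => qp q (r * bform (alph c) (wt a)))

/-- graded conjugation `†`, the linear map with `(E^a_b)† = (−1)^{[a]([a]+[b])} E^b_a`. -/
def dag {k : ℕ} (X : Matrix (Idx k) (Idx k) ℝ) : Matrix (Idx k) (Idx k) ℝ :=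
  Matrix.of fun i j => (-1:ℝ) ^ (par j * (par j + par i)) * X j i

/-- the q-bracket `[x,y]_q = xy − (−1)^{p_x p_y} q^{(λ_x,λ_y)} yx` of matrices carrying
weights `lx, ly` and parities `px, py`. -/
noncomputable def qbr {k : ℕ} (q : ℝ) (lx ly : Fin (k+1) → ℚ) (px py : ℕ)
    (x y : Matrix (Idx k) (Idx k) ℝ) : Matrix (Idx k) (Idx k) ℝ :=
  x * y - ((-1:ℝ) ^ (px * py) * qp q (bform lx ly)) • (y * x)

end Osp2n

/-! `ad_b` multiplies its argument by `E_b` on the left and on the right, up to diagonal factors,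
so the support of `ad_b X`, viewed as a relation on indices, is the support of `X` composed on
either side with that of `e_b`, whose only entries are `(o_b, o_(b+1))` and `(o_(n-b), o_(n+1-b))`.
Starting from the two entries of `E_c`, one such step leaves no index pair when `c` is not adjacent
to `b`, and two steps do when it is: exactly `1 - a_bc` steps. -/

namespace Osp2n

section Support

variable {n R : Type*}

def SupportedOn [Zero R] (S : n → n → Prop) (X : Matrix n n R) : Prop :=
  ∀ i j, ¬ S i j → X i j = 0

namespace SupportedOn

variable {S T : n → n → Prop} {X Y : Matrix n n R}

theorem eq_zero [Zero R] (hX : SupportedOn S X) (hS : ∀ i j, ¬ S i j) : X = 0 :=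
  Matrix.ext fun i j => hX i j (hS i j)

theorem mono [Zero R] (hX : SupportedOn S X) (hST : ∀ i j, S i j → T i j) :
    SupportedOn T X := fun i j h => hX i j (mt (hST i j) h)

theorem single [Zero R] [DecidableEq n] (x y : n) (c : R) :
    SupportedOn (fun i j => i = x ∧ j = y) (Matrix.single x y c) := fun i j h => by
  rw [Matrix.single_apply, if_neg]
  rintro ⟨rfl, rfl⟩
  exact h ⟨rfl, rfl⟩

theorem add [AddZeroClass R] (hX : SupportedOn S X) (hY : SupportedOn T Y) :
    SupportedOn (fun i j => S i j ∨ T i j) (X + Y) := fun i j h => by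
  rw [not_or] at h
  simp [hX i j h.1, hY i j h.2]

theorem sub [AddGroup R] (hX : SupportedOn S X) (hY : SupportedOn T Y) :
    SupportedOn (fun i j => S i j ∨ T i j) (X - Y) := fun i j h => by
  rw [not_or] at h
  simp [hX i j h.1, hY i j h.2]

theorem smul {M : Type*} [Zero R] [SMulZeroClass M R] (c : M) (hX : SupportedOn S X) :
    SupportedOn S (c • X) := fun i j h => by
  simp [hX i j h]

theorem mul [Fintype n] [NonUnitalNonAssocSemiring R] (hX : SupportedOn S X)
    (hY : SupportedOn T Y) : SupportedOn (Relation.Comp S T) (X * Y) := fun i j h => by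
  rw [Matrix.mul_apply]
  refine Finset.sum_eq_zero fun l _ => ?_
  by_cases hl : S i l
  · rw [hY l j fun hT => h ⟨l, hl, hT⟩, mul_zero]
  · rw [hX i l hl, zero_mul]

theorem isDiag_mul [Fintype n] [DecidableEq n] [NonUnitalNonAssocSemiring R]
    (hX : SupportedOn S X) {D : Matrix n n R} (hD : D.IsDiag) : SupportedOn S (D * X) := by
  rw [← hD.diagonal_diag]
  exact fun i j h => by simp [hX i j h]

theorem mul_isDiag [Fintype n] [DecidableEq n] [NonUnitalNonAssocSemiring R]
    (hX : SupportedOn S X) {D : Matrix n n R} (hD : D.IsDiag) : SupportedOn S (X * D) := by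
  rw [← hD.diagonal_diag]
  exact fun i j h => by simp [hX i j h]

end SupportedOn

def qadSupport (T S : n → n → Prop) : n → n → Prop :=
  fun i j => Relation.Comp T S i j ∨ Relation.Comp S T i j

variable [Fintype n] [DecidableEq n] [Ring R] {S T : n → n → Prop} {A D D' X : Matrix n n R}

theorem SupportedOn.qad (hA : SupportedOn T A) (hX : SupportedOn S X) (hD : D.IsDiag)
    (hD' : D'.IsDiag) : SupportedOn (qadSupport T S) (A * X - D * X * D' * A) :=
  (hA.mul hX).sub (((hX.isDiag_mul hD).mul_isDiag hD').mul hA)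

theorem SupportedOn.iterate_qad (hA : SupportedOn T A) (hX : SupportedOn S X) (hD : D.IsDiag)
    (hD' : D'.IsDiag) (m : ℕ) :
    SupportedOn ((qadSupport T)^[m] S) ((fun Y => A * Y - D * Y * D' * A)^[m] X) := by
  induction m with
  | zero => exact hX
  | succ m ih =>
    rw [Function.iterate_succ_apply', Function.iterate_succ_apply']
    exact hA.qad ih hD hD'

end Support

variable {k : ℕ}

def evenRootSupport (β : Fin (k-1)) : Idx k → Idx k → Prop := fun i j =>
  (i = .inr ⟨β, by have := β.isLt; omega⟩ ∧ j = .inr ⟨β+1, by have := β.isLt; omega⟩) ∨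
    (i = .inr ⟨2*k-β-2, by have := β.isLt; omega⟩ ∧
      j = .inr ⟨2*k-β-1, by have := β.isLt; omega⟩)

def oddRootSupport (hk : 1 ≤ k) : Idx k → Idx k → Prop := fun i j =>
  (i = .inr ⟨k-1, by omega⟩ ∧ ∃ e, j = .inl e) ∨ ((∃ e, i = .inl e) ∧ j = .inr ⟨k, by omega⟩)

theorem isDiag_qh (q : ℝ) (r : ℚ) (c : SIdx k) : (qh q r c).IsDiag := isDiag_diagonal _

theorem supportedOn_em_inl_mul_qh (hk : 1 ≤ k) (q : ℝ) (r : ℚ) (β : Fin (k-1)) :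
    SupportedOn (evenRootSupport β) (em hk (.inl β) * qh q r (.inl β)) :=
  ((SupportedOn.single _ _ _).add (SupportedOn.single _ _ _)).mul_isDiag (isDiag_qh q r _)

theorem supportedOn_em_inr_mul_qh (hk : 1 ≤ k) (q : ℝ) (r : ℚ) (i : Fin 2) :
    SupportedOn (oddRootSupport hk) (em hk (.inr i) * qh q r (.inr i)) := by
  refine SupportedOn.mul_isDiag ?_ (isDiag_qh q r _)
  fin_cases i
  all_goals
    refine ((SupportedOn.single _ _ _).add ((SupportedOn.single _ _ _).smul _)).mono ?_
    rintro a b (h | h) <;> simp_all [oddRootSupport]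

theorem not_iterate_qadSupport_evenRoot {β ν : Fin (k-1)} (h : β ≠ ν) (i j : Idx k) :
    ¬ (qadSupport (evenRootSupport β))^[if (ν : ℕ) = β + 1 ∨ (β : ℕ) = ν + 1 then 2 else 1]
      (evenRootSupport ν) i j := by
  have := Fin.val_ne_of_ne h
  have := β.isLt
  have := ν.isLt
  split_ifs with hadj
  all_goals
    intro hij
    simp only [Function.iterate_succ, Function.iterate_zero, Function.comp_apply, id,
      qadSupport, Relation.Comp, evenRootSupport] at hij
    casesm* _ ∨ _, _ ∧ _, _root_.Exists _ <;> subst_vars <;>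
      simp only [Sum.inr.injEq, Fin.mk.injEq] at * <;> omega

theorem not_iterate_qadSupport_oddRoot (hk : 1 ≤ k) (β : Fin (k-1)) (i j : Idx k) :
    ¬ (qadSupport (evenRootSupport β))^[if (β : ℕ) + 1 = k - 1 then 2 else 1]
      (oddRootSupport hk) i j := by
  have := β.isLt
  split_ifs with hadj
  all_goals
    intro hij
    simp only [Function.iterate_succ, Function.iterate_zero, Function.comp_apply, id,
      qadSupport, Relation.Comp, evenRootSupport, oddRootSupport] at hij
    casesm* _ ∨ _, _ ∧ _, _root_.Exists _ <;> subst_vars <;>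
      simp only [Sum.inr.injEq, Fin.mk.injEq, reduceCtorEq] at * <;> omega

theorem bform_sub_left (u v g : Fin (k+1) → ℚ) : bform (u - v) g = bform u g - bform v g := by
  simp only [bform, Pi.sub_apply, sub_mul, Finset.sum_sub_distrib]
  ring

theorem bform_single_left (i : Fin (k+1)) (hi : (i : ℕ) < k) (c : ℚ) (g : Fin (k+1) → ℚ) :
    bform (Pi.single i c) g = -(c * g i) := by
  obtain ⟨j, rfl⟩ : ∃ j : Fin k, j.castSucc = i := ⟨⟨i, hi⟩, rfl⟩
  simp [bform, Pi.single_apply, Fin.castSucc_ne_last]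

theorem bform_alph_inl_left (β : Fin (k-1)) (g : Fin (k+1) → ℚ) :
    bform (alph (.inl β)) g
      = g ⟨β+1, by have := β.isLt; omega⟩ - g ⟨β, by have := β.isLt; omega⟩ := by
  have := β.isLt
  rw [alph, bform_sub_left, bform_single_left _ (by simp; omega),
    bform_single_left _ (by simp; omega)]
  ring

theorem bform_alph_inl_self (β : Fin (k-1)) : bform (alph (.inl β)) (alph (.inl β)) = -2 := by
  rw [bform_alph_inl_left]
  simp [alph, Fin.ext_iff]
  norm_num

theorem bform_alph_inl_inl {β ν : Fin (k-1)} (h : β ≠ ν) :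
    bform (alph (.inl β)) (alph (.inl ν))
      = if (ν : ℕ) = β + 1 ∨ (β : ℕ) = ν + 1 then 1 else 0 := by
  have := β.isLt
  rw [Ne, Fin.ext_iff] at h
  rw [bform_alph_inl_left]
  simp only [alph, Pi.sub_apply, Pi.single_apply, Fin.ext_iff]
  split_ifs <;> first | omega | norm_num

theorem bform_alph_inl_inr (β : Fin (k-1)) (i : Fin 2) :
    bform (alph (.inl β)) (alph (.inr i))
      = if (β : ℕ) + 1 = k - 1 then 1 else 0 := by
  have := β.isLt
  rw [bform_alph_inl_left]
  simp only [alph, Pi.add_apply, Pi.single_apply, Fin.ext_iff, Fin.val_last]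
  split_ifs <;> first | omega | norm_num

theorem q_serre_even_general (k : ℕ) (hk : 2 ≤ k) (q : ℝ)
    (b : Fin (k-1)) (c : SIdx k) (hbc : (Sum.inl b : SIdx k) ≠ c)
    (m : ℕ)
    (hm : (m : ℚ) = 1 - 2 * bform (alph (Sum.inl b : SIdx k)) (alph c) /
            bform (alph (Sum.inl b : SIdx k)) (alph (Sum.inl b : SIdx k))) :
    (fun X : Matrix (Idx k) (Idx k) ℝ =>
        (em (Nat.le_of_succ_le hk) (Sum.inl b) * qh q (1/2) (Sum.inl b)) * X
        - qh q 1 (Sum.inl b) * X * qh q (-1) (Sum.inl b) *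
            (em (Nat.le_of_succ_le hk) (Sum.inl b) * qh q (1/2) (Sum.inl b)))^[m]
      (em (Nat.le_of_succ_le hk) c * qh q (1/2) c) = 0 := by
  have hk1 : 1 ≤ k := Nat.le_of_succ_le hk
  have hEb := supportedOn_em_inl_mul_qh hk1 q (1/2) b
  rw [bform_alph_inl_self] at hm
  rcases c with ν | i
  · have hbν : b ≠ ν := fun h => hbc (congrArg Sum.inl h)
    obtain rfl : m = if (ν : ℕ) = b + 1 ∨ (b : ℕ) = ν + 1 then 2 else 1 := by
      rw [bform_alph_inl_inl hbν] at hm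
      split_ifs at hm ⊢ <;> norm_num at hm <;> exact_mod_cast hm
    exact (hEb.iterate_qad (supportedOn_em_inl_mul_qh hk1 q (1/2) ν) (isDiag_qh q 1 _)
      (isDiag_qh q (-1) _) _).eq_zero (not_iterate_qadSupport_evenRoot hbν)
  · obtain rfl : m = if (b : ℕ) + 1 = k - 1 then 2 else 1 := by
      rw [bform_alph_inl_inr] at hm
      split_ifs at hm ⊢ <;> norm_num at hm <;> exact_mod_cast hm
    exact (hEb.iterate_qad (supportedOn_em_inr_mul_qh hk1 q (1/2) i) (isDiag_qh q 1 _)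
      (isDiag_qh q (-1) _) _).eq_zero (not_iterate_qadSupport_oddRoot hk1 b)

/-- The q-Serre relations for the even simple roots: for every even
simple root index `b` and simple root index `c ≠ b`,
`(ad_b)^{1−a_{bc}}(E_c) = 0` where `E_c = e_c q^{h_c/2}`,
`ad_b(X) = E_b X − q^{h_b} X q^{−h_b} E_b` and `a_{bc} = 2(α_b,α_c)/(α_b,α_b)`. -/
theorem q_serre_even (k : ℕ) (hk : 2 ≤ k) (q : ℝ) (hq : 0 < q) (hq1 : q ≠ 1)
    (b : Fin (k-1)) (c : SIdx k) (hbc : (Sum.inl b : SIdx k) ≠ c)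
    (m : ℕ)
    (hm : (m : ℚ) = 1 - 2 * bform (alph (Sum.inl b : SIdx k)) (alph c) /
            bform (alph (Sum.inl b : SIdx k)) (alph (Sum.inl b : SIdx k))) :
    (fun X : Matrix (Idx k) (Idx k) ℝ =>
        (em (Nat.le_of_succ_le hk) (Sum.inl b) * qh q (1/2) (Sum.inl b)) * X
        - qh q 1 (Sum.inl b) * X * qh q (-1) (Sum.inl b) *
            (em (Nat.le_of_succ_le hk) (Sum.inl b) * qh q (1/2) (Sum.inl b)))^[m]
      (em (Nat.le_of_succ_le hk) c * qh q (1/2) c) = 0 :=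
  q_serre_even_general k hk q b c hbc m hm

end Osp2n
end

section
/- The operators σ̂_{ba} of the vector representation of U_q[osp(2|n)] satisfy the induction relations: for all a, b, c ∈ I with ε_b > ε_c > ε_a, c ≠ ā and c ≠ b̄, one has σ̂_{ba} = q^{−(ε_b, ε_a)} σ̂_{bc} σ̂_{ca} − q^{−(ε_c, ε_c)} (−1)^{([b]+[c])([a]+[c])} σ̂_{ca} σ̂_{bc}. -/
open Matrix BigOperators

/-!
In `σ̂_{bc} σ̂_{ca}` only the product `E^b_c E^c_a = E^b_a` of the four products of elementary
matrices survives, because `c ∉ {ā, b̄}` and `a ≠ b`; likewise `σ̂_{ca} σ̂_{bc}` is a multiple of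
`E^{ā}_{c̄} E^{c̄}_{b̄} = E^{ā}_{b̄}`. Since `ε_c ≠ ±ε_a, ±ε_b`, the weight `ε_c` is orthogonal to
`ε_a` and `ε_b`, so the first product carries exactly the coefficient `q^{-(ε_a,ε_b)}` of `E^b_a`
in `σ̂_{ba}`. In the second product the `ρ`-exponents add up telescopically,
`(ρ, ε_a - ε_c) + (ρ, ε_c - ε_b) = (ρ, ε_a - ε_b)`, and the extra factors `ξ_c²`, `q^{(ε_c,ε_c)}`
and the graded signs are cancelled by the prefactor of the relation.
-/

namespace Osp2n

section

variable {k : ℕ}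

lemma bar_involutive : Function.Involutive (bar : Idx k → Idx k) := by
  intro x
  cases x <;> simp [bar]

lemma qp_add {q : ℝ} (hq : 0 < q) (r s : ℚ) : qp q (r + s) = qp q r * qp q s := by
  simp only [qp, Rat.cast_add, Real.rpow_add hq]

lemma qp_zero (q : ℝ) : qp q 0 = 1 := by
  simp [qp]

lemma qp_neg_mul_qp {q : ℝ} (hq : 0 < q) (r : ℚ) : qp q (-r) * qp q r = 1 := by
  rw [← qp_add hq, neg_add_cancel, qp_zero]

lemma bform_comm (u v : Fin (k+1) → ℚ) : bform u v = bform v u := by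
  simp [bform, mul_comm]

lemma bform_add_right (u v w : Fin (k+1) → ℚ) :
    bform u (v + w) = bform u v + bform u w := by
  simp only [bform, Pi.add_apply, mul_add, Finset.sum_add_distrib]
  ring

lemma bform_neg_left (u v : Fin (k+1) → ℚ) : bform (-u) v = -bform u v := by
  simp only [bform, Pi.neg_apply, neg_mul, Finset.sum_neg_distrib]
  ring

lemma bform_neg_right (u v : Fin (k+1) → ℚ) : bform u (-v) = -bform u v := by
  rw [bform_comm, bform_neg_left, bform_comm]

lemma bform_single_single_of_ne {i j : Fin (k+1)} (hij : i ≠ j) (x y : ℚ) :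
    bform (Pi.single i x) (Pi.single j y) = 0 := by
  have hprod (m : Fin (k+1)) :
      (Pi.single i x : Fin (k+1) → ℚ) m * (Pi.single j y : Fin (k+1) → ℚ) m = 0 := by
    by_cases hm : m = i
    · simp [hm, Pi.single_eq_of_ne hij]
    · simp [Pi.single_eq_of_ne hm]
  simp [bform, hprod]

def wtCoord : Idx k → Fin (k+1)
  | .inl _ => Fin.last k
  | .inr j =>
      if h : (j : ℕ) < k then ⟨j, by omega⟩ else ⟨2*k - 1 - (j:ℕ), by have := j.isLt; omega⟩

lemma wt_eq_single_or_neg (x : Idx k) :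
    wt x = Pi.single (wtCoord x) 1 ∨ wt x = -Pi.single (wtCoord x) 1 := by
  rcases x with i | j
  · by_cases hi : i = 0 <;> simp [wt, wtCoord, hi]
  · by_cases hj : (j : ℕ) < k <;> simp [wt, wtCoord, hj]

lemma eq_or_eq_bar_of_wtCoord_eq {x y : Idx k} (h : wtCoord x = wtCoord y) :
    y = x ∨ y = bar x := by
  rcases x with i | j <;> rcases y with i' | j'
  · fin_cases i <;> fin_cases i' <;> simp [bar]
  all_goals
    simp only [wtCoord, Fin.ext_iff, Fin.val_last] at h
    split_ifs at h <;>
      simp only [bar, Sum.inr.injEq, Fin.ext_iff, Fin.val_rev, reduceCtorEq] at h ⊢ <;>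
      omega

lemma bform_wt_eq_zero {x y : Idx k} (hxy : y ≠ x) (hxy' : y ≠ bar x) :
    bform (wt x) (wt y) = 0 := by
  have hne : wtCoord x ≠ wtCoord y := fun h =>
    (eq_or_eq_bar_of_wtCoord_eq h).elim hxy hxy'
  rcases wt_eq_single_or_neg x with hx | hx <;> rcases wt_eq_single_or_neg y with hy | hy <;>
    simp [hx, hy, bform_neg_left, bform_neg_right, bform_single_single_of_ne hne]

lemma neg_one_pow_graded_sign (a b c : ℕ) :
    (-1 : ℝ) ^ ((b + c) * (a + c)) * ((-1) ^ (c * (a + c)) * (-1) ^ (b * (c + b))) =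
      (-1) ^ (b * (a + b)) := by
  rw [← pow_add, ← pow_add,
    show (b + c) * (a + c) + (c * (a + c) + b * (c + b)) = b * (a + b) + 2 * (b * c + c * (a + c))
      by ring,
    pow_add _ _ (2 * _), pow_mul]
  simp

lemma xi_mul_self (x : Idx k) : xi x * xi x = 1 := by
  rcases x with i | j
  · simp [xi]
  · simp [xi, ← pow_add, ← two_mul]

lemma E_mul_E (x y z : Idx k) : E x y * E y z = E x z := by
  simp [E, Matrix.single_mul_single_same]

lemma E_mul_E_of_ne (x : Idx k) {y y' : Idx k} (h : y ≠ y') (z : Idx k) :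
    E x y * E y' z = 0 :=
  Matrix.single_mul_single_of_ne (c := 1) x y y' h 1

noncomputable def sigHBarCoeff (q : ℝ) (b a : Idx k) : ℝ :=
  (-1:ℝ) ^ (par b * (par a + par b)) * xi a * xi b * qp q (bform (wt a) (wt a)) *
    qp q (bform (rho k) (wt a - wt b))

lemma sigH_eq (q : ℝ) (b a : Idx k) :
    sigH q b a = qp q (-(bform (wt a) (wt b))) • E b a - sigHBarCoeff q b a • E (bar a) (bar b) :=
  rfl

lemma sigH_mul_sigH (q : ℝ) {a b c : Idx k} (hab : a ≠ b) (hca : c ≠ bar a) (hcb : c ≠ bar b) :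
    sigH q b c * sigH q c a =
      (qp q (-(bform (wt c) (wt b))) * qp q (-(bform (wt a) (wt c)))) • E b a := by
  have hbar : bar b ≠ bar a := bar_involutive.injective.ne (Ne.symm hab)
  simp only [sigH_eq, sub_mul, mul_sub, smul_mul_smul, E_mul_E, E_mul_E_of_ne _ hca,
    E_mul_E_of_ne _ (Ne.symm hcb), E_mul_E_of_ne _ hbar, smul_zero, sub_zero]

lemma sigH_mul_sigH_swap (q : ℝ) {a b c : Idx k} (hab : a ≠ b) (hca : c ≠ bar a)
    (hcb : c ≠ bar b) :
    sigH q c a * sigH q b c = (sigHBarCoeff q c a * sigHBarCoeff q b c) • E (bar a) (bar b) := by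
  have hac : a ≠ bar c := fun h => hca (bar_involutive.eq_iff.mp h.symm)
  have hcb' : bar c ≠ b := fun h => hcb (bar_involutive.eq_iff.mp h)
  simp only [sigH_eq, sub_mul, mul_sub, smul_mul_smul, E_mul_E, E_mul_E_of_ne _ hab,
    E_mul_E_of_ne _ hac, E_mul_E_of_ne _ hcb', smul_zero, zero_sub, sub_zero, sub_neg_eq_add,
    zero_add]

lemma sigHBarCoeff_induction {q : ℝ} (hq : 0 < q) (a b c : Idx k) :
    (-1) ^ ((par b + par c) * (par a + par c)) * qp q (-(bform (wt c) (wt c))) *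
        (sigHBarCoeff q c a * sigHBarCoeff q b c) = sigHBarCoeff q b a := by
  have hrho : qp q (bform (rho k) (wt a - wt c)) * qp q (bform (rho k) (wt c - wt b)) =
      qp q (bform (rho k) (wt a - wt b)) := by
    rw [← qp_add hq, ← bform_add_right, sub_add_sub_cancel]
  calc (-1) ^ ((par b + par c) * (par a + par c)) * qp q (-(bform (wt c) (wt c))) *
        (sigHBarCoeff q c a * sigHBarCoeff q b c)
      = ((-1) ^ ((par b + par c) * (par a + par c)) *
            ((-1) ^ (par c * (par a + par c)) * (-1) ^ (par b * (par c + par b)))) *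
          (xi c * xi c) * (qp q (-(bform (wt c) (wt c))) * qp q (bform (wt c) (wt c))) *
          xi a * xi b * qp q (bform (wt a) (wt a)) *
          (qp q (bform (rho k) (wt a - wt c)) * qp q (bform (rho k) (wt c - wt b))) := by
        unfold sigHBarCoeff; ring
    _ = sigHBarCoeff q b a := by
        rw [neg_one_pow_graded_sign, xi_mul_self, qp_neg_mul_qp hq, hrho]
        unfold sigHBarCoeff; ring

end

theorem induction_relations_general (k : ℕ) (q : ℝ) (hq : 0 < q)
    (a b c : Idx k) (hbc : rk b < rk c) (hca : rk c < rk a)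
    (h1 : c ≠ bar a) (h2 : c ≠ bar b) :
    sigH q b a
    = qp q (-(bform (wt b) (wt a))) • (sigH q b c * sigH q c a)
      - ((-1:ℝ) ^ ((par b + par c) * (par a + par c)) * qp q (-(bform (wt c) (wt c)))) •
          (sigH q c a * sigH q b c) := by
  have hab : a ≠ b := by rintro rfl; omega
  have hcb : c ≠ b := by rintro rfl; omega
  have hca' : c ≠ a := by rintro rfl; omega
  rw [sigH_mul_sigH q hab h1 h2, sigH_mul_sigH_swap q hab h1 h2, smul_smul, smul_smul,
    sigHBarCoeff_induction hq, bform_comm (wt c), bform_wt_eq_zero hcb h2,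
    bform_wt_eq_zero hca' h1, bform_comm (wt b), neg_zero, qp_zero, mul_one, mul_one, sigH_eq]

/-- The induction relations for the σ̂-operators of the vector
representation: for `ε_b > ε_c > ε_a` with `c ≠ ā`, `c ≠ b̄`,
`σ̂_{ba} = q^{−(ε_b,ε_a)} σ̂_{bc} σ̂_{ca}
          − q^{−(ε_c,ε_c)} (−1)^{([b]+[c])([a]+[c])} σ̂_{ca} σ̂_{bc}`. -/
theorem induction_relations (k : ℕ) (hk : 1 ≤ k) (q : ℝ) (hq : 0 < q) (hq1 : q ≠ 1)
    (a b c : Idx k) (hbc : rk b < rk c) (hca : rk c < rk a)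
    (h1 : c ≠ bar a) (h2 : c ≠ bar b) :
    sigH q b a
    = qp q (-(bform (wt b) (wt a))) • (sigH q b c * sigH q c a)
      - ((-1:ℝ) ^ ((par b + par c) * (par a + par c)) * qp q (-(bform (wt c) (wt c)))) •
          (sigH q c a * sigH q b c) :=
  induction_relations_general k q hq a b c hbc hca h1 h2

end Osp2n
end
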